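/- The L² norm computation for the Farey wavelet: with ψ(x) = K₀·((1/3)φ(2x) − φ(2x−1) + (1/3)φ(2x−2)) where φ is the modified Farey scaling function and K₀ = (4log2−2)/√(3−4log2), one has ‖ψ‖₂² = 1. -/

import Mathlib

open MeasureTheory Real

/-- The modified Farey scaling function. -/
noncomputable def fareyPhi (x : ℝ) : ℝ :=
  if -1 ≤ x ∧ x ≤ 0 then (1 / (4 * Real.log 2 - 2)) * ((1 + x) / (1 - x))
  else if 0 ≤ x ∧ x ≤ 1 then (1 / (4 * Real.log 2 - 2)) * ((1 - x) / (1 + x))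
  else 0

/-- The Farey mother wavelet expressed through the two-scale combination. -/
noncomputable def fareyPsi (x : ℝ) : ℝ :=
  ((4 * Real.log 2 - 2) / Real.sqrt (3 - 4 * Real.log 2)) *
    ((1/3) * fareyPhi (2*x) - fareyPhi (2*x - 1) + (1/3) * fareyPhi (2*x - 2))

/-!
Write `φ = b / (4 log 2 - 2)` with `b t = (1 - |t|) / (1 + |t|)` on `[-1, 1]`. Since
`K₀ / (4 log 2 - 2) = 1 / √(3 - 4 log 2)`, we get `ψ² = w² / (3 - 4 log 2)` for
`w x = b (2x) / 3 - b (2x - 1) + b (2x - 2) / 3`, so it suffices that `∫ w² = 3 - 4 log 2`.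
The function `w` is continuous, vanishes outside `[-1/2, 3/2]` and is symmetric about `1/2`; on
`[-1/2, 0]` and `[0, 1/2]` it is rational with elementary antiderivatives of its square, and the
two pieces contribute `(3 - 4 log 2) / 18` and `4 (3 - 4 log 2) / 9`.
-/

open Set intervalIntegral

lemma four_mul_log_two_sub_two_pos : 0 < 4 * log 2 - 2 := by
  linarith [log_two_gt_d9]

lemma three_sub_four_mul_log_two_pos : 0 < 3 - 4 * log 2 := by
  linarith [log_two_lt_d9]

/-- The positive part encodes the cut-off at `|t| = 1` and makes continuity evident. -/
noncomputable def fareyBump (t : ℝ) : ℝ :=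
  max 0 ((1 - |t|) / (1 + |t|))

lemma fareyBump_of_abs_le {t : ℝ} (ht : |t| ≤ 1) : fareyBump t = (1 - |t|) / (1 + |t|) :=
  max_eq_right (div_nonneg (by linarith) (by positivity))

lemma fareyBump_of_one_le_abs {t : ℝ} (ht : 1 ≤ |t|) : fareyBump t = 0 :=
  max_eq_left (div_nonpos_of_nonpos_of_nonneg (by linarith) (by positivity))

lemma fareyBump_neg (t : ℝ) : fareyBump (-t) = fareyBump t := by
  rw [fareyBump, fareyBump, abs_neg]

lemma continuous_fareyBump : Continuous fareyBump :=
  continuous_const.max <| by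
    fun_prop (disch := exact fun t => by positivity)

lemma fareyPhi_eq_mul_fareyBump (x : ℝ) : fareyPhi x = (4 * log 2 - 2)⁻¹ * fareyBump x := by
  rw [fareyPhi, one_div]
  split_ifs with h₁ h₂
  · rw [fareyBump_of_abs_le (abs_le.2 ⟨h₁.1, by linarith⟩), abs_of_nonpos h₁.2]
    ring
  · rw [fareyBump_of_abs_le (abs_le.2 ⟨by linarith, h₂.2⟩), abs_of_nonneg h₂.1]
  · rw [fareyBump_of_one_le_abs, mul_zero]
    contrapose! h₂
    rw [abs_lt] at h₂
    exact ⟨not_lt.1 fun h => h₁ ⟨h₂.1.le, h.le⟩, h₂.2.le⟩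

noncomputable def fareyWave (x : ℝ) : ℝ :=
  fareyBump (2 * x) / 3 - fareyBump (2 * x - 1) + fareyBump (2 * x - 2) / 3

lemma fareyPsi_sq (x : ℝ) : fareyPsi x ^ 2 = fareyWave x ^ 2 / (3 - 4 * log 2) := by
  have hc := four_mul_log_two_sub_two_pos.ne'
  simp only [fareyPsi, fareyWave, fareyPhi_eq_mul_fareyBump]
  rw [mul_pow, div_pow, sq_sqrt three_sub_four_mul_log_two_pos.le]
  field_simp

lemma continuous_fareyWave : Continuous fareyWave := by
  unfold fareyWave
  have := continuous_fareyBump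
  fun_prop

lemma fareyWave_one_sub (x : ℝ) : fareyWave (1 - x) = fareyWave x := by
  simp only [fareyWave]
  rw [← fareyBump_neg (2 * (1 - x)), ← fareyBump_neg (2 * (1 - x) - 1),
    ← fareyBump_neg (2 * (1 - x) - 2)]
  ring_nf

lemma fareyWave_of_le_neg_half {x : ℝ} (hx : x ≤ -1 / 2) : fareyWave x = 0 := by
  have h {t : ℝ} (ht : t ≤ 2 * x) : fareyBump t = 0 :=
    fareyBump_of_one_le_abs (by rw [abs_of_neg (by linarith)]; linarith)
  rw [fareyWave, h le_rfl, h (by linarith), h (by linarith)]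
  norm_num

lemma fareyWave_of_three_halves_le {x : ℝ} (hx : 3 / 2 ≤ x) : fareyWave x = 0 := by
  rw [← fareyWave_one_sub]
  exact fareyWave_of_le_neg_half (by linarith)

lemma fareyWave_of_mem_Icc_neg_half_zero {x : ℝ} (hx : x ∈ Icc (-1 / 2) 0) :
    fareyWave x = (1 + 2 * x) / (1 - 2 * x) / 3 := by
  obtain ⟨hx₁, hx₂⟩ := hx
  rw [fareyWave, fareyBump_of_abs_le (by rw [abs_of_nonpos (by linarith)]; linarith),
    fareyBump_of_one_le_abs (by rw [abs_of_nonpos (by linarith)]; linarith),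
    fareyBump_of_one_le_abs (by rw [abs_of_nonpos (by linarith)]; linarith),
    abs_of_nonpos (by linarith), sub_neg_eq_add, ← sub_eq_add_neg]
  ring

lemma fareyWave_of_mem_Icc_zero_half {x : ℝ} (hx : x ∈ Icc 0 (1 / 2)) :
    fareyWave x = (1 - 2 * x) / (1 + 2 * x) / 3 - x / (1 - x) := by
  obtain ⟨hx₁, hx₂⟩ := hx
  rw [fareyWave, fareyBump_of_abs_le (by rw [abs_of_nonneg (by linarith)]; linarith),
    fareyBump_of_abs_le (by rw [abs_of_nonpos (by linarith)]; linarith),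
    fareyBump_of_one_le_abs (by rw [abs_of_nonpos (by linarith)]; linarith),
    abs_of_nonneg (by linarith), abs_of_nonpos (by linarith), neg_sub]
  have : 1 - x ≠ 0 := by linarith
  have : 1 + (1 - 2 * x) ≠ 0 := by linarith
  field_simp
  ring

lemma integral_fareyWave_sq_neg_half_zero :
    ∫ x in (-1 / 2)..0, fareyWave x ^ 2 = (3 - 4 * log 2) / 18 := by
  have hF : ∀ x ∈ uIcc (-1 / 2 : ℝ) 0, HasDerivAt
      (fun x => (2 / (1 - 2 * x) + 2 * log (1 - 2 * x) + x) / 9) (fareyWave x ^ 2) x := by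
    intro x hx
    rw [uIcc_of_le (by norm_num)] at hx
    have hpos : 0 < 1 - 2 * x := by linarith [hx.2]
    have hlin : HasDerivAt (fun x => 1 - 2 * x) (-2) x := by
      simpa using ((hasDerivAt_id x).const_mul 2).const_sub 1
    have hrec := (hasDerivAt_const x (2 : ℝ)).div hlin hpos.ne'
    have hlog := (hlin.log hpos.ne').const_mul 2
    refine (((hrec.add hlog).add (hasDerivAt_id x)).div_const 9).congr_deriv ?_
    rw [fareyWave_of_mem_Icc_neg_half_zero hx]
    field_simp
    ring
  rw [integral_eq_sub_of_hasDerivAt hF ((continuous_fareyWave.pow 2).intervalIntegrable _ _)]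
  norm_num
  ring

lemma integral_fareyWave_sq_zero_half :
    ∫ x in (0 : ℝ)..(1 / 2), fareyWave x ^ 2 = 4 * (3 - 4 * log 2) / 9 := by
  have hF : ∀ x ∈ uIcc (0 : ℝ) (1 / 2), HasDerivAt
      (fun x => (4 * x - 2 / (1 + 2 * x) + 16 * log (1 - x)) / 9 + 1 / (1 - x))
      (fareyWave x ^ 2) x := by
    intro x hx
    rw [uIcc_of_le (by norm_num)] at hx
    have hpos₁ : 0 < 1 + 2 * x := by linarith [hx.1]
    have hpos₂ : 0 < 1 - x := by linarith [hx.2]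
    have hlin₁ : HasDerivAt (fun x => 1 + 2 * x) 2 x := by
      simpa using ((hasDerivAt_id x).const_mul 2).const_add 1
    have hlin₂ : HasDerivAt (fun x => 1 - x) (-1) x := by
      simpa using (hasDerivAt_id x).const_sub 1
    have hrec₁ := (hasDerivAt_const x (2 : ℝ)).div hlin₁ hpos₁.ne'
    have hrec₂ := (hasDerivAt_const x (1 : ℝ)).div hlin₂ hpos₂.ne'
    have hlog := (hlin₂.log hpos₂.ne').const_mul 16
    refine (((((hasDerivAt_id' x).const_mul 4).sub hrec₁).add hlog).div_const 9).add hrec₂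
      |>.congr_deriv ?_
    rw [fareyWave_of_mem_Icc_zero_half hx]
    field_simp
    ring
  rw [integral_eq_sub_of_hasDerivAt hF ((continuous_fareyWave.pow 2).intervalIntegrable _ _)]
  rw [show (1 : ℝ) - 1 / 2 = 2⁻¹ by norm_num, log_inv]
  norm_num
  ring

lemma integral_fareyWave_sq : ∫ x, fareyWave x ^ 2 = 3 - 4 * log 2 := by
  have hint (a b : ℝ) : IntervalIntegrable (fun x => fareyWave x ^ 2) volume a b :=
    (continuous_fareyWave.pow 2).intervalIntegrable a b
  have hsupp : Function.support (fun x => fareyWave x ^ 2) ⊆ Ioc (-1 / 2) (3 / 2) := by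
    intro x hx
    by_contra h
    rw [mem_Ioc, not_and_or, not_lt, not_le] at h
    rcases h with h | h
    · simp [fareyWave_of_le_neg_half h] at hx
    · simp [fareyWave_of_three_halves_le h.le] at hx
  have hsymm : ∫ x in (1 / 2)..(3 / 2), fareyWave x ^ 2
      = ∫ x in (-1 / 2)..(1 / 2), fareyWave x ^ 2 := by
    have := integral_comp_sub_left (fun x => fareyWave x ^ 2) (a := -1 / 2) (b := 1 / 2) 1
    simp only [fareyWave_one_sub] at this
    norm_num at this ⊢
    exact this.symm
  rw [← integral_eq_integral_of_support_subset hsupp,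
    ← integral_add_adjacent_intervals (hint _ (1 / 2)) (hint _ _), hsymm,
    ← integral_add_adjacent_intervals (hint _ 0) (hint _ _),
    integral_fareyWave_sq_neg_half_zero, integral_fareyWave_sq_zero_half]
  ring

theorem fareyPsi_L2_norm : ∫ x : ℝ, (fareyPsi x)^2 = 1 := by
  simp_rw [fareyPsi_sq, MeasureTheory.integral_div, integral_fareyWave_sq]
  exact div_self three_sub_four_mul_log_two_pos.ne'
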